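/- Let λ ≥ 2 be a cardinal. The λ-polycyclic monoid P_λ endowed with the topology τ_mi is absolutely H-closed in the class of topological inverse semigroups: for every continuous homomorphism h from (P_λ, τ_mi) into a topological inverse semigroup T, the image h(P_λ) is a closed subset of every topological inverse semigroup containing it as an inverse subsemigroup with the subspace topology. -/

import Mathlib

/-!
A homomorphism from `P_λ` (`λ ≥ 2`) into an inverse semigroup is injective or constant: if it
identifies two elements it identifies two distinct idempotents `α⁻¹α ≠ β⁻¹β`, then also some
`γ⁻¹γ` with `0`, and `u⁻¹v = u⁻¹(vγ) · γ⁻¹γ · γ⁻¹` then collapses everything onto the image of `0`.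
So it suffices that a continuous injective homomorphism `g` into a Hausdorff topological inverse
semigroup has closed range. In `τ_mi` the idempotents `a⁻¹a` converge to `0`, so together with `0`
they form a compact set `E`. For `x` in the closure of the range, `xx⁻¹` and `x⁻¹x` lie in the
compact set `g(E)`. If one of them is `g 0` then `x = g 0`; otherwise they are `g(c⁻¹c)` and
`g(d⁻¹d)`, and since `g(E \ {c⁻¹c})` and `g(E \ {d⁻¹d})` are closed, `t ↦ (tt⁻¹, t⁻¹t)`
separates `x` from every point of the range other than `g(c⁻¹d)`.
-/

universe u v

/-- An inverse semigroup: every element has a unique (von Neumann) inverse. -/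
class InverseSemigroup (S : Type u) extends Semigroup S, Inv S where
  mul_inv_mul : ∀ a : S, a * a⁻¹ * a = a
  inv_mul_inv : ∀ a : S, a⁻¹ * a * a⁻¹ = a⁻¹
  inv_unique : ∀ a b : S, a * b * a = a → b * a * b = b → b = a⁻¹

/-- The λ-polycyclic monoid over the index type `ι` (of cardinality λ), realized as
`(M_λ × M_λ) ∪ {0}` where `M_λ = FreeMonoid ι` is the free monoid on λ generators;
the pair `(a, b)` encodes the element `a⁻¹b` and `none` is the zero. -/
abbrev PolyMon (ι : Type u) : Type u := Option (FreeMonoid ι × FreeMonoid ι)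

/-- The nonzero element `a⁻¹b` of the polycyclic monoid. -/
def polyEl {ι : Type u} (a b : FreeMonoid ι) : PolyMon ι := some (a, b)

instance {ι : Type u} : Zero (PolyMon ι) := ⟨none⟩

instance {ι : Type u} : One (PolyMon ι) := ⟨polyEl 1 1⟩

open Classical in
/-- Multiplication of the polycyclic monoid:
`a⁻¹b · c⁻¹d = (c₁a)⁻¹d` if `c = c₁b`; `= a⁻¹(b₁d)` if `b = b₁c`; `= 0` otherwise,
and `0` is a two-sided zero. -/
noncomputable def polyMul {ι : Type u} (x y : PolyMon ι) : PolyMon ι :=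
  Option.bind x fun p => Option.bind y fun q =>
    if h : ∃ c₁ : FreeMonoid ι, q.1 = c₁ * p.2 then some (Classical.choose h * p.1, q.2)
    else if h' : ∃ b₁ : FreeMonoid ι, p.2 = b₁ * q.1 then some (p.1, Classical.choose h' * q.2)
    else none

noncomputable instance {ι : Type u} : Mul (PolyMon ι) := ⟨polyMul⟩

/-- Inversion of the polycyclic monoid: `(a⁻¹b)⁻¹ = b⁻¹a` and `0⁻¹ = 0`. -/
instance {ι : Type u} : Inv (PolyMon ι) :=
  ⟨fun x => Option.map (fun p => (p.2, p.1)) x⟩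

/-- The basic neighbourhood `U_A(0) = {a⁻¹b : a, b ∈ M_λ \ A} ∪ {0}` of zero. -/
def U0 {ι : Type u} (A : Set (FreeMonoid ι)) : Set (PolyMon ι) :=
  {x | x = 0 ∨ ∃ a b : FreeMonoid ι, a ∉ A ∧ b ∉ A ∧ x = polyEl a b}

/-- The topology `τ_mi` on the polycyclic monoid: all nonzero elements are isolated and
the sets `U_A(0)`, for `A` a finite subset of the free monoid, form a base at `0`. -/
def tauMi (ι : Type u) : TopologicalSpace (PolyMon ι) :=
  TopologicalSpace.generateFrom
    ({s | ∃ x : PolyMon ι, x ≠ 0 ∧ s = {x}} ∪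
     {s | ∃ A : Set (FreeMonoid ι), A.Finite ∧ s = U0 A})

/-- A subset `A` of a topological magma (with the subspace topology and induced
multiplication) is H-closed in the class of topological inverse semigroups: whenever `A` is
embedded topologically and multiplicatively into a Hausdorff topological inverse semigroup,
its image is closed. -/
def IsHClosedTISSet {X : Type u} [Mul X] [TopologicalSpace X] (A : Set X) : Prop :=
  ∀ (T : Type v) [InverseSemigroup T] [TopologicalSpace T] [T2Space T]
    [ContinuousMul T] [ContinuousInv T] (f : A → T),
    Function.Injective f → Topology.IsInducing f →
    (∀ (x y : A) (h : (x : X) * (y : X) ∈ A), f ⟨(x : X) * (y : X), h⟩ = f x * f y) →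
    IsClosed (Set.range f)

namespace FreeMonoid

variable {ι : Type*}

theorem exists_eq_mul_of_of_ne_one {e : FreeMonoid ι} (he : e ≠ 1) :
    ∃ L p, e = L * of p := by
  rcases List.eq_nil_or_concat (toList e) with h | ⟨L, p, h⟩
  · exact absurd (toList.injective h) he
  · exact ⟨ofList L, p, toList.injective (by simpa using h)⟩

theorem eq_of_mul_of_eq_mul_of {x y : FreeMonoid ι} {p q : ι}
    (h : x * of p = y * of q) : p = q := by
  have := List.append_inj' (congrArg toList h) rfl
  simpa using this.2

theorem exists_suffix_incomparable [Nontrivial ι] {α β : FreeMonoid ι} (hne : α ≠ β)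
    (hlen : β.length ≤ α.length) :
    ∃ γ, (∃ x, γ = x * β) ∧ (¬∃ x, γ = x * α) ∧ ¬∃ x, α = x * γ := by
  by_cases hαβ : ∃ e, α = e * β
  · obtain ⟨e, rfl⟩ := hαβ
    obtain ⟨L, p, rfl⟩ := exists_eq_mul_of_of_ne_one (e := e) fun he => hne (by simp [he])
    -- prepend to `β` a letter different from the last letter of `e`
    obtain ⟨q, hqp⟩ := exists_ne p
    refine ⟨of q * β, ⟨_, rfl⟩, ?_, ?_⟩
    · rintro ⟨x, hx⟩
      have : 1 * of q = x * L * of p :=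
        mul_right_cancel (by rw [one_mul, hx]; simp only [mul_assoc])
      exact hqp (eq_of_mul_of_eq_mul_of this)
    · rintro ⟨x, hx⟩
      have : L * of p = x * of q :=
        mul_right_cancel (by rw [hx, mul_assoc x])
      exact hqp (eq_of_mul_of_eq_mul_of this).symm
  · refine ⟨β, ⟨1, (one_mul β).symm⟩, ?_, hαβ⟩
    rintro ⟨x, hx⟩
    have hlen' := congrArg length hx
    rw [length_mul] at hlen'
    obtain rfl : x = 1 := length_eq_zero.mp (by omega)
    exact hne (by rw [hx, one_mul])

end FreeMonoid

namespace PolyMon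

variable {ι : Type u}

theorem polyEl_ne_zero (a b : FreeMonoid ι) : polyEl a b ≠ 0 := Option.some_ne_none _

theorem polyEl_inj {a b c d : FreeMonoid ι} : polyEl a b = polyEl c d ↔ a = c ∧ b = d := by
  simp [polyEl]

theorem zero_mul (y : PolyMon ι) : 0 * y = 0 := rfl

theorem mul_zero (x : PolyMon ι) : x * 0 = 0 := by
  cases x <;> rfl

theorem inv_polyEl (a b : FreeMonoid ι) : (polyEl a b)⁻¹ = polyEl b a := rfl

theorem polyEl_mul_polyEl_of_eq_mul_right {a b c d c₁ : FreeMonoid ι} (h : c = c₁ * b) :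
    polyEl a b * polyEl c d = polyEl (c₁ * a) d := by
  have hc : ∃ x, c = x * b := ⟨c₁, h⟩
  change polyMul (some (a, b)) (some (c, d)) = _
  simp only [polyMul, Option.bind_some, dif_pos hc]
  rw [mul_right_cancel ((Classical.choose_spec hc).symm.trans h)]
  rfl

theorem polyEl_mul_polyEl_of_eq_mul_left {a b c d b₁ : FreeMonoid ι} (h : b = b₁ * c) :
    polyEl a b * polyEl c d = polyEl a (b₁ * d) := by
  by_cases hc : ∃ x, c = x * b
  · obtain ⟨x, hx⟩ := hc
    -- `b` and `c` are suffixes of each other, so they are equal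
    have hxb : x * b₁ = 1 := right_eq_mul.mp (by rw [mul_assoc, ← h, ← hx])
    rw [polyEl_mul_polyEl_of_eq_mul_right hx, eq_one_of_mul_right' hxb, eq_one_of_mul_left' hxb,
      one_mul, one_mul]
  · change polyMul (some (a, b)) (some (c, d)) = _
    have hb : ∃ x, b = x * c := ⟨b₁, h⟩
    simp only [polyMul, Option.bind_some, dif_neg hc, dif_pos hb]
    rw [mul_right_cancel ((Classical.choose_spec hb).symm.trans h)]
    rfl

theorem polyEl_mul_polyEl_eq_zero {a b c d : FreeMonoid ι} (hc : ¬∃ x, c = x * b)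
    (hb : ¬∃ x, b = x * c) : polyEl a b * polyEl c d = 0 := by
  change polyMul (some (a, b)) (some (c, d)) = _
  simp only [polyMul, Option.bind_some, dif_neg hc, dif_neg hb]
  rfl

theorem polyEl_mul_polyEl_self (a b d : FreeMonoid ι) : polyEl a b * polyEl b d = polyEl a d := by
  simpa using polyEl_mul_polyEl_of_eq_mul_right (a := a) (d := d) (one_mul b).symm

theorem polyEl_mul_inv (a b : FreeMonoid ι) : polyEl a b * (polyEl a b)⁻¹ = polyEl a a :=
  polyEl_mul_polyEl_self a b a

theorem polyEl_inv_mul (a b : FreeMonoid ι) : (polyEl a b)⁻¹ * polyEl a b = polyEl b b :=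
  polyEl_mul_polyEl_self b a b

theorem mul_inv_mul (y : PolyMon ι) : y * y⁻¹ * y = y := by
  rcases y with _ | ⟨a, b⟩
  · rfl
  · exact (congrArg (· * polyEl a b) (polyEl_mul_inv a b)).trans (polyEl_mul_polyEl_self a a b)

theorem inv_mul_inv (y : PolyMon ι) : y⁻¹ * y * y⁻¹ = y⁻¹ := by
  rcases y with _ | ⟨a, b⟩
  · rfl
  · exact (congrArg (· * polyEl b a) (polyEl_inv_mul a b)).trans (polyEl_mul_polyEl_self b b a)

def idempotents (ι : Type u) : Set (PolyMon ι) := insert 0 (Set.range fun a => polyEl a a)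

theorem mul_inv_mem_idempotents (y : PolyMon ι) : y * y⁻¹ ∈ idempotents ι := by
  rcases y with _ | ⟨a, b⟩
  · exact Set.mem_insert _ _
  · exact Or.inr ⟨a, (polyEl_mul_inv a b).symm⟩

theorem inv_mul_mem_idempotents (y : PolyMon ι) : y⁻¹ * y ∈ idempotents ι := by
  rcases y with _ | ⟨a, b⟩
  · exact Set.mem_insert _ _
  · exact Or.inr ⟨b, (polyEl_inv_mul a b).symm⟩

theorem eq_of_mul_inv_eq_of_inv_mul_eq {s t : PolyMon ι} (h₁ : s * s⁻¹ = t * t⁻¹)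
    (h₂ : s⁻¹ * s = t⁻¹ * t) : s = t := by
  rcases s with _ | ⟨a, b⟩ <;> rcases t with _ | ⟨c, d⟩
  · rfl
  · exact absurd (h₁.trans (polyEl_mul_inv c d)).symm (polyEl_ne_zero c c)
  · exact absurd (h₁.symm.trans (polyEl_mul_inv a b)).symm (polyEl_ne_zero a a)
  · have hac := polyEl_inj.mp ((polyEl_mul_inv a b).symm.trans (h₁.trans (polyEl_mul_inv c d)))
    have hbd := polyEl_inj.mp ((polyEl_inv_mul a b).symm.trans (h₂.trans (polyEl_inv_mul c d)))
    rw [show a = c from hac.1, show b = d from hbd.1]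

section Hom

variable {M : Type*} [Mul M] {g : PolyMon ι → M} (hg : ∀ x y, g (x * y) = g x * g y)
include hg

theorem map_eq_map_zero_of_map_polyEl_self {γ : FreeMonoid ι} (hγ : g (polyEl γ γ) = g 0)
    (y : PolyMon ι) : g y = g 0 := by
  rcases y with _ | ⟨u, v⟩
  · rfl
  · have h₁ : polyEl u (v * γ) * polyEl γ γ = polyEl u (v * γ) :=
      polyEl_mul_polyEl_of_eq_mul_left rfl
    have h₂ : polyEl u (v * γ) * polyEl γ 1 = polyEl u v := by
      simpa using polyEl_mul_polyEl_of_eq_mul_left (a := u) (d := 1) (b₁ := v) rfl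
    calc g (polyEl u v) = g (polyEl u (v * γ) * polyEl γ γ * polyEl γ 1) := by rw [h₁, h₂]
      _ = g (polyEl u (v * γ)) * g 0 * g (polyEl γ 1) := by rw [hg, hg, hγ]
      _ = g (polyEl u (v * γ) * 0 * polyEl γ 1) := by rw [hg, hg]
      _ = g 0 := by rw [mul_zero, zero_mul]

theorem exists_map_polyEl_self_eq_map_zero_of_ne [Nontrivial ι] {α β : FreeMonoid ι}
    (hne : α ≠ β) (h : g (polyEl α α) = g (polyEl β β)) : ∃ γ, g (polyEl γ γ) = g 0 := by
  wlog hlen : β.length ≤ α.length generalizing α β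
  · exact this hne.symm h.symm (by omega)
  obtain ⟨_, ⟨x, rfl⟩, h₁, h₂⟩ := FreeMonoid.exists_suffix_incomparable hne hlen
  refine ⟨x * β, ?_⟩
  -- `(xβ)⁻¹(xβ)` lies below `β⁻¹β` but is orthogonal to `α⁻¹α`
  calc g (polyEl (x * β) (x * β)) = g (polyEl (x * β) (x * β) * polyEl β β) := by
        rw [polyEl_mul_polyEl_of_eq_mul_left rfl]
    _ = g (polyEl (x * β) (x * β) * polyEl α α) := by rw [hg, hg, h]
    _ = g 0 := by rw [polyEl_mul_polyEl_eq_zero h₂ h₁]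

theorem exists_map_polyEl_self_eq_map_zero [Nontrivial ι] {e f : PolyMon ι}
    (he : e ∈ idempotents ι) (hf : f ∈ idempotents ι) (hne : e ≠ f) (h : g e = g f) :
    ∃ γ, g (polyEl γ γ) = g 0 := by
  rcases he with rfl | ⟨α, rfl⟩ <;> rcases hf with rfl | ⟨β, rfl⟩
  · exact absurd rfl hne
  · exact ⟨β, h.symm⟩
  · exact ⟨α, h⟩
  · exact exists_map_polyEl_self_eq_map_zero_of_ne hg (fun hαβ => hne (by rw [hαβ])) h

end Hom

theorem map_inv {M : Type*} [InverseSemigroup M] {g : PolyMon ι → M}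
    (hg : ∀ x y, g (x * y) = g x * g y) (y : PolyMon ι) : g y⁻¹ = (g y)⁻¹ :=
  InverseSemigroup.inv_unique _ _ (by rw [← hg, ← hg, mul_inv_mul])
    (by rw [← hg, ← hg, inv_mul_inv])

theorem injective_or_forall_eq_map_zero [Nontrivial ι] {M : Type*} [InverseSemigroup M]
    {g : PolyMon ι → M} (hg : ∀ x y, g (x * y) = g x * g y) :
    Function.Injective g ∨ ∀ y, g y = g 0 := by
  refine or_iff_not_imp_left.mpr fun hinj => ?_
  obtain ⟨s, t, hst, hne⟩ : ∃ s t, g s = g t ∧ s ≠ t := by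
    simpa [Function.Injective] using hinj
  have hmi : g (s * s⁻¹) = g (t * t⁻¹) := by rw [hg, hg, map_inv hg, map_inv hg, hst]
  have him : g (s⁻¹ * s) = g (t⁻¹ * t) := by rw [hg, hg, map_inv hg, map_inv hg, hst]
  obtain ⟨γ, hγ⟩ : ∃ γ, g (polyEl γ γ) = g 0 := by
    by_cases h : s * s⁻¹ = t * t⁻¹
    · exact exists_map_polyEl_self_eq_map_zero hg (inv_mul_mem_idempotents s)
        (inv_mul_mem_idempotents t) (fun h' => hne (eq_of_mul_inv_eq_of_inv_mul_eq h h')) him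
    · exact exists_map_polyEl_self_eq_map_zero hg (mul_inv_mem_idempotents s)
        (mul_inv_mem_idempotents t) h hmi
  exact map_eq_map_zero_of_map_polyEl_self hg hγ

open Filter Topology

attribute [local instance] tauMi

theorem isOpen_singleton_of_ne_zero {x : PolyMon ι} (hx : x ≠ 0) : IsOpen {x} :=
  TopologicalSpace.isOpen_generateFrom_of_mem (Or.inl ⟨x, hx, rfl⟩)

theorem tendsto_polyEl_self_cofinite :
    Tendsto (fun a : FreeMonoid ι => polyEl a a) cofinite (𝓝 0) := by
  rw [show 𝓝 (0 : PolyMon ι) = _ from TopologicalSpace.nhds_generateFrom]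
  simp only [tendsto_iInf, tendsto_principal]
  rintro _ ⟨h0, ⟨x, hx, rfl⟩ | ⟨A, hA, rfl⟩⟩
  · exact absurd (Set.mem_singleton_iff.mp h0).symm hx
  · refine eventually_cofinite.mpr (hA.subset fun a ha => ?_)
    by_contra haA
    exact ha (Or.inr ⟨a, a, haA, haA, rfl⟩)

theorem isCompact_idempotents : IsCompact (idempotents ι) :=
  tendsto_polyEl_self_cofinite.isCompact_insert_range_of_cofinite

theorem map_zero_absorbs_of_mem_closure {T : Type*} [Mul T] [TopologicalSpace T] [ContinuousMul T]
    [T1Space T] {g : PolyMon ι → T} {x : T} (hg : ∀ x y, g (x * y) = g x * g y)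
    (hx : x ∈ closure (Set.range g)) : g 0 * x = g 0 ∧ x * g 0 = g 0 := by
  have hl := map_mem_closure (f := (g 0 * ·)) (by fun_prop) hx (t := {g 0})
    (by rintro _ ⟨y, rfl⟩; exact (hg 0 y).symm.trans (congrArg g (zero_mul y)))
  have hr := map_mem_closure (f := (· * g 0)) (by fun_prop) hx (t := {g 0})
    (by rintro _ ⟨y, rfl⟩; exact (hg y 0).symm.trans (congrArg g (mul_zero y)))
  rw [closure_singleton] at hl hr
  exact ⟨hl, hr⟩

section ClosedRange

variable {T : Type*} [InverseSemigroup T] [TopologicalSpace T] [T2Space T] [ContinuousMul T]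
  [ContinuousInv T] {g : PolyMon ι → T}

theorem mul_inv_mem_image_idempotents_of_mem_closure {x : T} (hc : Continuous g)
    (hg : ∀ x y, g (x * y) = g x * g y) (hx : x ∈ closure (Set.range g)) :
    x * x⁻¹ ∈ g '' idempotents ι ∧ x⁻¹ * x ∈ g '' idempotents ι := by
  have hK : IsClosed (g '' idempotents ι) := (isCompact_idempotents.image hc).isClosed
  refine ⟨hK.closure_subset (map_mem_closure (f := fun t => t * t⁻¹) (by fun_prop) hx ?_),
    hK.closure_subset (map_mem_closure (f := fun t => t⁻¹ * t) (by fun_prop) hx ?_)⟩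
  · rintro _ ⟨y, rfl⟩
    exact ⟨_, mul_inv_mem_idempotents y, by rw [hg, map_inv hg]⟩
  · rintro _ ⟨y, rfl⟩
    exact ⟨_, inv_mul_mem_idempotents y, by rw [hg, map_inv hg]⟩

theorem isClosed_range_of_injective (hc : Continuous g)
    (hg : ∀ x y, g (x * y) = g x * g y) (hinj : Function.Injective g) :
    IsClosed (Set.range g) := by
  refine isClosed_of_closure_subset fun x hx => ?_
  obtain ⟨⟨e, he, hex⟩, ⟨f, hf, hfx⟩⟩ := mul_inv_mem_image_idempotents_of_mem_closure hc hg hx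
  obtain ⟨hzx, hxz⟩ := map_zero_absorbs_of_mem_closure hg hx
  rcases he with rfl | ⟨c, rfl⟩
  · exact ⟨0, by rw [← hzx, hex, InverseSemigroup.mul_inv_mul]⟩
  rcases hf with rfl | ⟨d, rfl⟩
  · exact ⟨0, by rw [← hxz, hfx, ← mul_assoc, InverseSemigroup.mul_inv_mul]⟩
  -- near `x`, the only point of the range with idempotents `c⁻¹c` and `d⁻¹d` is `c⁻¹d`
  set V : Set T := (fun t => t * t⁻¹) ⁻¹' (g '' (idempotents ι \ {polyEl c c}))ᶜ ∩
    (fun t => t⁻¹ * t) ⁻¹' (g '' (idempotents ι \ {polyEl d d}))ᶜ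
  have hV : IsOpen V := by
    refine .inter (.preimage (by fun_prop) ?_) (.preimage (by fun_prop) ?_) <;>
    exact ((isCompact_idempotents.diff (isOpen_singleton_of_ne_zero (polyEl_ne_zero _ _))).image
      hc).isClosed.isOpen_compl
  have hxV : x ∈ V := by
    refine ⟨?_, ?_⟩ <;> rintro ⟨_, ⟨-, hne⟩, heq⟩
    exacts [hne (hinj (heq.trans hex.symm)), hne (hinj (heq.trans hfx.symm))]
  have hVg : V ∩ Set.range g ⊆ {g (polyEl c d)} := by
    rintro _ ⟨⟨hy₁, hy₂⟩, y, rfl⟩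
    have h₁ : y * y⁻¹ = polyEl c c := by
      by_contra hne
      exact hy₁ ⟨_, ⟨mul_inv_mem_idempotents y, hne⟩, by rw [hg, map_inv hg]⟩
    have h₂ : y⁻¹ * y = polyEl d d := by
      by_contra hne
      exact hy₂ ⟨_, ⟨inv_mul_mem_idempotents y, hne⟩, by rw [hg, map_inv hg]⟩
    rw [eq_of_mul_inv_eq_of_inv_mul_eq (h₁.trans (polyEl_mul_inv c d).symm)
      (h₂.trans (polyEl_inv_mul c d).symm)]
    rfl
  have := closure_mono hVg (hV.inter_closure ⟨hxV, hx⟩)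
  rw [closure_singleton] at this
  exact ⟨_, this.symm⟩

theorem isClosed_range [Nontrivial ι] (hc : Continuous g)
    (hg : ∀ x y, g (x * y) = g x * g y) : IsClosed (Set.range g) := by
  rcases injective_or_forall_eq_map_zero hg with hinj | hconst
  · exact isClosed_range_of_injective hc hg hinj
  · rw [show g = fun _ => g 0 from funext hconst, Set.range_const]
    exact isClosed_singleton

end ClosedRange

end PolyMon

/-- For λ ≥ 2, the λ-polycyclic monoid `P_λ` with the topology `τ_mi` is absolutely
H-closed in the class of topological inverse semigroups: for every continuous homomorphism
`h` from `(P_λ, τ_mi)` into a topological inverse semigroup `T`, the image `h(P_λ)` is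
H-closed in the class of topological inverse semigroups. -/
theorem statement_13 {ι : Type u} [Nontrivial ι] :
    ∀ (T : Type v) [InverseSemigroup T] [TopologicalSpace T] [T2Space T]
      [ContinuousMul T] [ContinuousInv T] (h : PolyMon ι → T),
      @Continuous (PolyMon ι) T (tauMi ι) _ h →
      (∀ x y : PolyMon ι, h (x * y) = h x * h y) →
      IsHClosedTISSet.{v, w} (Set.range h) := by
  intro T _ _ _ _ _ h hc hh T' _ _ _ _ _ f _ hf hf_mul
  -- `f` pulled back along `h` is again a continuous homomorphism on `P_λ`, with the same range
  rw [← Set.rangeFactorization_surjective.range_comp f]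
  let := tauMi ι
  refine PolyMon.isClosed_range (hf.continuous.comp (hc.subtype_mk _)) fun x y => ?_
  have hxy : h x * h y ∈ Set.range h := hh x y ▸ Set.mem_range_self (x * y)
  exact (congrArg f (Subtype.ext (hh x y))).trans (hf_mul _ _ hxy)
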